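/- Let R be a ring. The following are equivalent: (1) R is a semisimple artinian ring; (2) every right R-module has a D3-cover; (3) every 2-generated right R-module has a D3-cover; (4) every right R-module has a D3-envelope; (5) every 2-generated right R-module has a D3-envelope. -/

import Mathlib

universe u v w

section Defs

variable {S : Type u} [Ring S]

/-- A submodule `A` is a direct summand of `M`. -/
def IsDirectSummand {M : Type v} [AddCommGroup M] [Module S M] (A : Submodule S M) : Prop :=
  ∃ B : Submodule S M, A ⊓ B = ⊥ ∧ A ⊔ B = ⊤

/-- `A` is an essential submodule of `B`. -/
def IsEssentialIn {M : Type v} [AddCommGroup M] [Module S M] (A B : Submodule S M) : Prop :=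
  A ≤ B ∧ ∀ K : Submodule S M, K ≤ B → K ≠ ⊥ → A ⊓ K ≠ ⊥

/-- `A` is essential in some direct summand of `M`. -/
def EssentialInSummand {M : Type v} [AddCommGroup M] [Module S M] (A : Submodule S M) : Prop :=
  ∃ D : Submodule S M, IsDirectSummand D ∧ IsEssentialIn A D

/-- `A` is a small (superfluous) submodule of `M`. -/
def IsSmallSubmodule {M : Type v} [AddCommGroup M] [Module S M] (A : Submodule S M) : Prop :=
  ∀ K : Submodule S M, A ⊔ K = ⊤ → K = ⊤

/-- `A` lies above the direct summand `D` of `M`, i.e. `D ≤ A` and `A/D` is small in `M/D`. -/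
def LiesAbove {M : Type v} [AddCommGroup M] [Module S M] (A D : Submodule S M) : Prop :=
  IsDirectSummand D ∧ D ≤ A ∧ IsSmallSubmodule (Submodule.map D.mkQ A)

/-- `A` lies above some direct summand of `M`. -/
def LiesAboveSummand {M : Type v} [AddCommGroup M] [Module S M] (A : Submodule S M) : Prop :=
  ∃ D : Submodule S M, LiesAbove A D

end Defs

section ModDefs

variable (S : Type u) [Ring S]

/-- SSP: the sum of any two direct summands is a direct summand. -/
def HasSSP (M : Type v) [AddCommGroup M] [Module S M] : Prop :=
  ∀ A B : Submodule S M, IsDirectSummand A → IsDirectSummand B → IsDirectSummand (A ⊔ B)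

/-- SIP: the intersection of any two direct summands is a direct summand. -/
def HasSIP (M : Type v) [AddCommGroup M] [Module S M] : Prop :=
  ∀ A B : Submodule S M, IsDirectSummand A → IsDirectSummand B → IsDirectSummand (A ⊓ B)

/-- SIP-CS: the intersection of any finite family of direct summands is essential in a
direct summand. -/
def IsSIPCS (M : Type v) [AddCommGroup M] [Module S M] : Prop :=
  ∀ (ι : Type) [Fintype ι] (A : ι → Submodule S M),
    (∀ i, IsDirectSummand (A i)) → EssentialInSummand (⨅ i, A i)

/-- SSP-lifting: if each member of a finite family of submodules lies above a direct summand,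
then their sum lies above a direct summand. -/
def IsSSPLifting (M : Type v) [AddCommGroup M] [Module S M] : Prop :=
  ∀ (ι : Type) [Fintype ι] (A : ι → Submodule S M),
    (∀ i, LiesAboveSummand (A i)) → LiesAboveSummand (⨆ i, A i)

/-- C2 condition: every submodule isomorphic to a direct summand is a direct summand. -/
def HasC2 (M : Type v) [AddCommGroup M] [Module S M] : Prop :=
  ∀ A B : Submodule S M, IsDirectSummand B → Nonempty (A ≃ₗ[S] B) → IsDirectSummand A

/-- C3 condition: the sum of two direct summands with zero intersection is a direct summand. -/
def HasC3 (M : Type v) [AddCommGroup M] [Module S M] : Prop :=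
  ∀ A B : Submodule S M, IsDirectSummand A → IsDirectSummand B → A ⊓ B = ⊥ →
    IsDirectSummand (A ⊔ B)

/-- D2 condition: if `M/A` is isomorphic to a direct summand of `M` then `A` is a direct
summand. -/
def HasD2 (M : Type v) [AddCommGroup M] [Module S M] : Prop :=
  ∀ A : Submodule S M, (∃ B : Submodule S M, IsDirectSummand B ∧
    Nonempty ((M ⧸ A) ≃ₗ[S] B)) → IsDirectSummand A

/-- D3 condition: if two direct summands sum to `M`, their intersection is a direct summand. -/
def IsD3Module (M : Type v) [AddCommGroup M] [Module S M] : Prop :=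
  ∀ A B : Submodule S M, IsDirectSummand A → IsDirectSummand B → A ⊔ B = ⊤ →
    IsDirectSummand (A ⊓ B)

/-- `M` is relatively CS-Rickart to `N`. -/
def RelCSRickart (M : Type v) (N : Type w) [AddCommGroup M] [Module S M]
    [AddCommGroup N] [Module S N] : Prop :=
  ∀ φ : M →ₗ[S] N, EssentialInSummand (LinearMap.ker φ)

/-- `M` is relatively d-CS-Rickart to `N`. -/
def RelDCSRickart (M : Type v) (N : Type w) [AddCommGroup M] [Module S M]
    [AddCommGroup N] [Module S N] : Prop :=
  ∀ φ : N →ₗ[S] M, LiesAboveSummand (LinearMap.range φ)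

/-- CS-Rickart module. -/
def IsCSRickart (M : Type v) [AddCommGroup M] [Module S M] : Prop :=
  RelCSRickart S M M

/-- d-CS-Rickart module. -/
def IsDCSRickart (M : Type v) [AddCommGroup M] [Module S M] : Prop :=
  RelDCSRickart S M M

/-- `M` has an `Ω`-cover, where `Ω` is the class of modules satisfying `P`. -/
def HasCover (P : ModuleCat.{v} S → Prop) (M : Type v) [AddCommGroup M] [Module S M] : Prop :=
  ∃ (E : ModuleCat.{v} S) (g : E →ₗ[S] M), P E ∧
    (∀ (E' : ModuleCat.{v} S), P E' → ∀ g' : E' →ₗ[S] M,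
      ∃ h : E' →ₗ[S] E, g ∘ₗ h = g') ∧
    (∀ h : E →ₗ[S] E, g ∘ₗ h = g → Function.Bijective h)

/-- `M` has an `Ω`-envelope, where `Ω` is the class of modules satisfying `P`. -/
def HasEnvelope (P : ModuleCat.{v} S → Prop) (M : Type v) [AddCommGroup M] [Module S M] : Prop :=
  ∃ (E : ModuleCat.{v} S) (g : M →ₗ[S] E), P E ∧
    (∀ (E' : ModuleCat.{v} S), P E' → ∀ g' : M →ₗ[S] E',
      ∃ h : E →ₗ[S] E', h ∘ₗ g = g') ∧
    (∀ h : E →ₗ[S] E, h ∘ₗ g = g → Function.Bijective h)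

/-- `M` is 2-generated. -/
def TwoGenerated (M : Type v) [AddCommGroup M] [Module S M] : Prop :=
  ∃ a b : M, Submodule.span S ({a, b} : Set M) = ⊤

/-- `M` is finitely cogenerated. -/
def FinitelyCogenerated (M : Type v) [AddCommGroup M] [Module S M] : Prop :=
  ∀ 𝒜 : Set (Submodule S M), sInf 𝒜 = ⊥ →
    ∃ ℬ ⊆ 𝒜, ℬ.Finite ∧ sInf ℬ = ⊥

/-- The socle of `M`: the sum of all simple submodules. -/
def SocleOf (M : Type v) [AddCommGroup M] [Module S M] : Submodule S M :=
  sSup {A : Submodule S M | IsSimpleModule S ↥A}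

/-- An indecomposable module: nonzero, and its only direct summands are `0` and itself. -/
def IsIndecomposable (M : Type v) [AddCommGroup M] [Module S M] : Prop :=
  (⊤ : Submodule S M) ≠ ⊥ ∧
    ∀ A : Submodule S M, IsDirectSummand A → A = ⊥ ∨ A = ⊤

end ModDefs

section RingDefs

variable (R : Type u) [Ring R]

/-- The right annihilator of an element of a right `R`-module, as a right ideal of `R`. -/
def rightAnnihilator {M : Type v} [AddCommGroup M] [Module Rᵐᵒᵖ M] (m : M) :
    Submodule Rᵐᵒᵖ R where
  carrier := {r : R | MulOpposite.op r • m = 0}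
  add_mem' := by
    intro a b ha hb
    simp only [Set.mem_setOf_eq] at *
    rw [MulOpposite.op_add, add_smul, ha, hb, add_zero]
  zero_mem' := by simp
  smul_mem' := by
    intro c x hx
    simp only [Set.mem_setOf_eq] at *
    have : MulOpposite.op (c • x) = c * MulOpposite.op x := by
      rw [MulOpposite.smul_eq_mul_unop]
      simp [MulOpposite.op_mul]
    rw [this, mul_smul, hx, smul_zero]

/-- `M` is a nonsingular right `R`-module. -/
def IsNonsingular (M : Type v) [AddCommGroup M] [Module Rᵐᵒᵖ M] : Prop :=
  ∀ m : M, IsEssentialIn (rightAnnihilator R m) (⊤ : Submodule Rᵐᵒᵖ R) → m = 0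

/-- `R` is a right V-ring: every simple right `R`-module is injective. -/
def IsRightVRing : Prop :=
  ∀ (N : Type u) [AddCommGroup N] [Module Rᵐᵒᵖ N],
    IsSimpleModule Rᵐᵒᵖ N → Module.Injective Rᵐᵒᵖ N

/-- `R` is semiregular: `R/J(R)` is von Neumann regular and idempotents lift modulo `J(R)`. -/
def IsSemiregularRing : Prop :=
  (∀ a : R, ∃ b : R, a - a * b * a ∈ Ideal.jacobson (⊥ : Ideal R) ∧ b = b * a * b) ∧
  (∀ a : R, a * a - a ∈ Ideal.jacobson (⊥ : Ideal R) →
    ∃ e : R, e * e = e ∧ e - a ∈ Ideal.jacobson (⊥ : Ideal R))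

end RingDefs


/-!
Over a semisimple ring every module is semisimple, hence D3, and so is its own D3-cover and
D3-envelope. Conversely, let `m` be a maximal right ideal. The regular module `R` is D3 (it is
projective) and so is the simple module `R/m`; the universal property of a D3-cover or
D3-envelope of the 2-generated module `R × R/m` then exhibits `R × R/m` as a retract of a D3
module, and D3 passes to retracts. In `R × R/m` the graph of `R → R/m` and `R × 0` are summands
that span the module and meet in `m × 0`, so `m` is a summand of `R`. A ring all of whose maximal
right ideals split is right semisimple, hence semisimple by Wedderburn–Artin.
-/

open Submodule LinearMap

section Summands

variable {S : Type u} [Ring S] {M : Type v} [AddCommGroup M] [Module S M]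
  {E : Type w} [AddCommGroup E] [Module S E]

theorem isDirectSummand_iff_exists_isCompl {A : Submodule S M} :
    IsDirectSummand A ↔ ∃ B, IsCompl A B := by
  simp only [IsDirectSummand, isCompl_iff, disjoint_iff, codisjoint_iff]

theorem IsCompl.isDirectSummand {A B : Submodule S M} (h : IsCompl A B) : IsDirectSummand A :=
  isDirectSummand_iff_exists_isCompl.mpr ⟨B, h⟩

theorem isDirectSummand_of_isSemisimpleModule [IsSemisimpleModule S M] (A : Submodule S M) :
    IsDirectSummand A :=
  (exists_isCompl A).choose_spec.isDirectSummand

theorem isDirectSummand_ker_of_projective {N : Type w} [AddCommGroup N] [Module S N]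
    [Module.Projective S N] (f : M →ₗ[S] N) (hf : Function.Surjective f) :
    IsDirectSummand (ker f) := by
  obtain ⟨s, hs⟩ := Module.projective_lifting_property f LinearMap.id hf
  have hidem : IsIdempotentElem (s ∘ₗ f) := by
    rw [IsIdempotentElem, Module.End.mul_eq_comp, comp_assoc, ← comp_assoc f, hs, id_comp]
  have hker : ker (s ∘ₗ f) = ker f :=
    ker_comp_of_ker_eq_bot _ (ker_eq_bot_of_inverse hs)
  exact hker ▸ hidem.isCompl.symm.isDirectSummand

theorem Module.Projective.quotient_of_isCompl [Module.Projective S M] {A B : Submodule S M}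
    (h : IsCompl A B) : Module.Projective S (M ⧸ A) :=
  .of_split (B.subtype ∘ₗ (quotientEquivOfIsCompl A B h).toLinearMap) A.mkQ <|
    LinearMap.ext fun x => mk_quotientEquivOfIsCompl_apply h x

theorem isCompl_comap_of_le_range {f : M →ₗ[S] E} (hf : Function.Injective f)
    {C W : Submodule S E} (hC : C ≤ range f) (h : IsCompl C W) :
    IsCompl (comap f C) (comap f W) := by
  refine ⟨?_, codisjoint_iff.mpr (eq_top_iff.mpr fun x _ => ?_)⟩
  · rw [disjoint_iff, ← comap_inf, h.inf_eq_bot, ← ker_eq_bot.mpr hf]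
    rfl
  · obtain ⟨c, hc, w, hw, hcw⟩ := mem_sup.mp (h.sup_eq_top ▸ mem_top : f x ∈ C ⊔ W)
    obtain ⟨y, rfl⟩ := hC hc
    refine mem_sup.mpr ⟨y, hc, x - y, ?_, by abel⟩
    rwa [mem_comap, map_sub, ← hcw, add_sub_cancel_left]

theorem isCompl_map_of_isCompl_comap {g : E →ₗ[S] M} (hg : Function.Surjective g)
    {C : Submodule S M} {W : Submodule S E} (h : IsCompl (comap g C) W) :
    IsCompl C (map g W) := by
  refine ⟨disjoint_iff.mpr (eq_bot_iff.mpr fun x hx => ?_),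
    codisjoint_iff.mpr (eq_top_iff.mpr fun x _ => ?_)⟩
  · obtain ⟨hxC, w, hw, rfl⟩ := mem_inf.mp hx
    have : w ∈ comap g C ⊓ W := mem_inf.mpr ⟨hxC, hw⟩
    rw [h.inf_eq_bot, mem_bot] at this
    simp [this]
  · obtain ⟨e, rfl⟩ := hg x
    obtain ⟨c, hc, w, hw, rfl⟩ := mem_sup.mp (h.sup_eq_top ▸ mem_top : e ∈ comap g C ⊔ W)
    rw [map_add]
    exact add_mem_sup hc (mem_map_of_mem hw)

theorem isCompl_comap_map_of_comp_eq_id {i : M →ₗ[S] E} {r : E →ₗ[S] M}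
    (hri : r ∘ₗ i = LinearMap.id) {C C' : Submodule S M} (h : IsCompl C C') :
    IsCompl (comap r C) (map i C') := by
  have hri' : ∀ x, r (i x) = x := LinearMap.congr_fun hri
  refine ⟨disjoint_iff.mpr (eq_bot_iff.mpr fun x hx => ?_),
    codisjoint_iff.mpr (eq_top_iff.mpr fun x _ => ?_)⟩
  · obtain ⟨hxC, c', hc', rfl⟩ := mem_inf.mp hx
    have : c' ∈ C ⊓ C' := mem_inf.mpr ⟨by simpa [hri'] using hxC, hc'⟩
    rw [h.inf_eq_bot, mem_bot] at this
    simp [this]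
  · obtain ⟨c, hc, c', hc', hcc'⟩ := mem_sup.mp (h.sup_eq_top ▸ mem_top : r x ∈ C ⊔ C')
    refine mem_sup.mpr ⟨x - i c', ?_, i c', mem_map_of_mem hc', sub_add_cancel x _⟩
    rwa [mem_comap, map_sub, hri', ← hcc', add_sub_cancel_right]

end Summands

section D3

variable {S : Type u} [Ring S] {M : Type v} [AddCommGroup M] [Module S M]
  {E : Type w} [AddCommGroup E] [Module S E]

theorem isD3Module_of_isSemisimpleModule [IsSemisimpleModule S M] : IsD3Module S M :=
  fun A B _ _ _ => isDirectSummand_of_isSemisimpleModule (A ⊓ B)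

/-- When `A ⊔ B = ⊤`, the map `M → M/A × M/B` is onto with kernel `A ⊓ B`, and its target is
projective when `A` and `B` are summands of a projective module. -/
theorem isD3Module_of_projective [Module.Projective S M] : IsD3Module S M := by
  intro A B hA hB hAB
  obtain ⟨A', hA'⟩ := isDirectSummand_iff_exists_isCompl.mp hA
  obtain ⟨B', hB'⟩ := isDirectSummand_iff_exists_isCompl.mp hB
  have := Module.Projective.quotient_of_isCompl hA'
  have := Module.Projective.quotient_of_isCompl hB'
  have hsurj : Function.Surjective (A.mkQ.prod B.mkQ) := by
    rw [← range_eq_top, range_prod_eq (by rwa [ker_mkQ, ker_mkQ]), range_mkQ, range_mkQ,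
      prod_top]
  simpa only [ker_prod, ker_mkQ] using isDirectSummand_ker_of_projective _ hsurj

theorem isD3Module_of_retract (i : M →ₗ[S] E) (r : E →ₗ[S] M) (hri : r ∘ₗ i = LinearMap.id)
    (hE : IsD3Module S E) : IsD3Module S M := by
  have hr : Function.Surjective r := fun x => ⟨i x, LinearMap.congr_fun hri x⟩
  have hri' : ∀ x, r (i x) = x := LinearMap.congr_fun hri
  have comap_summand {C : Submodule S M} (hC : IsDirectSummand C) :
      IsDirectSummand (comap r C) :=
    have ⟨_, hC'⟩ := isDirectSummand_iff_exists_isCompl.mp hC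
    (isCompl_comap_map_of_comp_eq_id hri hC').isDirectSummand
  intro A B hA hB hAB
  have hsup : comap r A ⊔ comap r B = ⊤ := by
    refine eq_top_iff.mpr fun x _ => ?_
    obtain ⟨a, ha, b, hb, hab⟩ := mem_sup.mp (hAB ▸ mem_top : r x ∈ A ⊔ B)
    refine mem_sup.mpr ⟨i a, by simpa [hri'] using ha, x - i a, ?_, add_sub_cancel _ x⟩
    rwa [mem_comap, map_sub, hri', ← hab, add_sub_cancel_left]
  obtain ⟨W, hW⟩ := isDirectSummand_iff_exists_isCompl.mp
    (hE _ _ (comap_summand hA) (comap_summand hB) hsup)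
  rw [← comap_inf] at hW
  exact (isCompl_map_of_isCompl_comap hr hW).isDirectSummand

theorem isCompl_graph_range_inr (f : M →ₗ[S] E) : IsCompl f.graph (range (inr S M E)) := by
  refine ⟨disjoint_iff.mpr (eq_bot_iff.mpr fun ⟨x, y⟩ hxy => ?_),
    codisjoint_iff.mpr (eq_top_iff.mpr fun ⟨x, y⟩ _ => ?_)⟩
  · obtain ⟨hgraph, z, hz⟩ := mem_inf.mp hxy
    simp only [inr_apply, Prod.mk.injEq] at hz
    obtain ⟨rfl, rfl⟩ := hz
    simp_all [mem_graph_iff]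
  · exact mem_sup.mpr ⟨(x, f x), (mem_graph_iff _ _).mpr rfl, (0, y - f x), ⟨y - f x, rfl⟩,
      by simp⟩

theorem isDirectSummand_ker_of_isD3Module_prod {Q : Type w} [AddCommGroup Q] [Module S Q]
    (p : M →ₗ[S] Q) (hp : Function.Surjective p) (h : IsD3Module S (M × Q)) :
    IsDirectSummand (ker p) := by
  have hsup : p.graph ⊔ range (inl S M Q) = ⊤ := by
    refine eq_top_iff.mpr fun ⟨x, y⟩ _ => ?_
    obtain ⟨z, rfl⟩ := hp y
    exact mem_sup.mpr ⟨(z, p z), (mem_graph_iff _ _).mpr rfl, (x - z, 0), ⟨x - z, rfl⟩, by simp⟩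
  obtain ⟨W, hW⟩ := isDirectSummand_iff_exists_isCompl.mp <|
    h _ _ (isCompl_graph_range_inr p).isDirectSummand isCompl_range_inl_inr.isDirectSummand hsup
  have hker : comap (inl S M Q) (p.graph ⊓ range (inl S M Q)) = ker p := by
    ext x
    simp [mem_graph_iff, eq_comm]
  exact hker ▸ (isCompl_comap_of_le_range inl_injective inf_le_right hW).isDirectSummand

end D3

section CoversAndEnvelopes

variable {S : Type u} [Ring S] {P : ModuleCat.{v} S → Prop}

theorem hasCover_self {M : Type v} [AddCommGroup M] [Module S M] (hM : P (.of S M)) :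
    HasCover S P M :=
  ⟨.of S M, LinearMap.id, hM, fun _ _ g' => ⟨g', id_comp g'⟩,
    fun h hh => by rw [id_comp] at hh; exact hh ▸ Function.bijective_id⟩

theorem hasEnvelope_self {M : Type v} [AddCommGroup M] [Module S M] (hM : P (.of S M)) :
    HasEnvelope S P M :=
  ⟨.of S M, LinearMap.id, hM, fun _ _ g' => ⟨g', comp_id g'⟩,
    fun h hh => by rw [comp_id] at hh; exact hh ▸ Function.bijective_id⟩

variable {X Y : Type v} [AddCommGroup X] [Module S X] [AddCommGroup Y] [Module S Y]

theorem exists_retract_of_hasCover_prod (hX : P (.of S X)) (hY : P (.of S Y))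
    (h : HasCover S P (X × Y)) :
    ∃ (E : ModuleCat.{v} S) (i : X × Y →ₗ[S] E) (r : E →ₗ[S] X × Y),
      P E ∧ r ∘ₗ i = LinearMap.id := by
  obtain ⟨E, g, hE, hfac, -⟩ := h
  obtain ⟨h₁, hh₁⟩ := hfac _ hX (inl S X Y)
  obtain ⟨h₂, hh₂⟩ := hfac _ hY (inr S X Y)
  exact ⟨E, h₁.coprod h₂, g, hE, by rw [comp_coprod, hh₁, hh₂, coprod_inl_inr]⟩

theorem exists_retract_of_hasEnvelope_prod (hX : P (.of S X)) (hY : P (.of S Y))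
    (h : HasEnvelope S P (X × Y)) :
    ∃ (E : ModuleCat.{v} S) (i : X × Y →ₗ[S] E) (r : E →ₗ[S] X × Y),
      P E ∧ r ∘ₗ i = LinearMap.id := by
  obtain ⟨E, g, hE, hfac, -⟩ := h
  obtain ⟨h₁, hh₁⟩ := hfac _ hX (fst S X Y)
  obtain ⟨h₂, hh₂⟩ := hfac _ hY (snd S X Y)
  exact ⟨E, g, h₁.prod h₂, hE, by rw [prod_comp, hh₁, hh₂, pair_fst_snd]⟩

end CoversAndEnvelopes

/-- A proper socle would lie in a maximal submodule `m`, but a complement of `m` is simple. -/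
theorem isSemisimpleModule_of_forall_isCoatom_exists_isCompl {S : Type u} [Ring S] {M : Type v}
    [AddCommGroup M] [Module S M] [IsCoatomic (Submodule S M)]
    (h : ∀ m : Submodule S M, IsCoatom m → ∃ U, IsCompl m U) : IsSemisimpleModule S M := by
  rw [← sSup_simples_eq_top_iff_isSemisimpleModule]
  by_contra hsoc
  obtain ⟨m, hm, hle⟩ := (eq_top_or_exists_le_coatom _).resolve_left hsoc
  obtain ⟨U, hU⟩ := h m hm
  have := isSimpleModule_iff_isCoatom.mpr hm
  have hUsimple : IsSimpleModule S U := .congr (quotientEquivOfIsCompl m U hU).symm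
  have hUm : U ≤ m := (le_sSup (s := {p : Submodule S M | IsSimpleModule S p}) hUsimple).trans hle
  exact hm.1 (by rw [← hU.sup_eq_top, sup_eq_left.mpr hUm])

section RightModules

variable (R : Type u) [Ring R]

theorem isSemisimpleRing_of_isSemisimpleModule_op [IsSemisimpleModule Rᵐᵒᵖ R] :
    IsSemisimpleRing R := by
  rw [← isSemisimpleRing_mulOpposite_iff]
  exact .congr (MulOpposite.opLinearEquiv Rᵐᵒᵖ).symm

instance : Module.Projective Rᵐᵒᵖ R := .of_equiv (MulOpposite.opLinearEquiv Rᵐᵒᵖ).symm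

instance : Module.Finite Rᵐᵒᵖ R := .equiv (MulOpposite.opLinearEquiv Rᵐᵒᵖ).symm

theorem twoGenerated_prod_quotient (m : Submodule Rᵐᵒᵖ R) :
    TwoGenerated Rᵐᵒᵖ (R × (R ⧸ m)) := by
  refine ⟨(1, 0), (0, m.mkQ 1), eq_top_iff.mpr fun ⟨r, q⟩ _ => ?_⟩
  obtain ⟨s, rfl⟩ := m.mkQ_surjective q
  have : (r, m.mkQ s) = MulOpposite.op r • ((1 : R), (0 : R ⧸ m)) +
      MulOpposite.op s • ((0 : R), m.mkQ 1) := by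
    ext <;> simp [← Submodule.Quotient.mk_smul]
  rw [this]
  exact add_mem (smul_mem _ _ (subset_span (by simp))) (smul_mem _ _ (subset_span (by simp)))

theorem isSemisimpleRing_of_isD3Module_prod_quotient
    (h : ∀ m : Submodule Rᵐᵒᵖ R, IsCoatom m → IsD3Module Rᵐᵒᵖ (R × (R ⧸ m))) :
    IsSemisimpleRing R := by
  have : IsSemisimpleModule Rᵐᵒᵖ R :=
    isSemisimpleModule_of_forall_isCoatom_exists_isCompl fun m hm =>
      isDirectSummand_iff_exists_isCompl.mp <|
        by simpa using isDirectSummand_ker_of_isD3Module_prod m.mkQ m.mkQ_surjective (h m hm)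
  exact isSemisimpleRing_of_isSemisimpleModule_op R

end RightModules

/-- `R` is semisimple artinian iff every (2-generated) right `R`-module has a
D3-cover, iff every (2-generated) right `R`-module has a D3-envelope. -/
theorem statement_5 (R : Type u) [Ring R] :
    List.TFAE [
      IsSemisimpleRing R,
      ∀ (M : Type u) [AddCommGroup M] [Module Rᵐᵒᵖ M],
        HasCover Rᵐᵒᵖ (fun E => IsD3Module Rᵐᵒᵖ E) M,
      ∀ (M : Type u) [AddCommGroup M] [Module Rᵐᵒᵖ M], TwoGenerated Rᵐᵒᵖ M →
        HasCover Rᵐᵒᵖ (fun E => IsD3Module Rᵐᵒᵖ E) M,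
      ∀ (M : Type u) [AddCommGroup M] [Module Rᵐᵒᵖ M],
        HasEnvelope Rᵐᵒᵖ (fun E => IsD3Module Rᵐᵒᵖ E) M,
      ∀ (M : Type u) [AddCommGroup M] [Module Rᵐᵒᵖ M], TwoGenerated Rᵐᵒᵖ M →
        HasEnvelope Rᵐᵒᵖ (fun E => IsD3Module Rᵐᵒᵖ E) M] := by
  have hR : IsD3Module Rᵐᵒᵖ R := isD3Module_of_projective
  have hsimple (m : Submodule Rᵐᵒᵖ R) (hm : IsCoatom m) : IsD3Module Rᵐᵒᵖ (R ⧸ m) :=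
    have := isSimpleModule_iff_isCoatom.mpr hm
    isD3Module_of_isSemisimpleModule
  tfae_have 1 → 2 := fun _ _ _ _ => hasCover_self isD3Module_of_isSemisimpleModule
  tfae_have 1 → 4 := fun _ _ _ _ => hasEnvelope_self isD3Module_of_isSemisimpleModule
  tfae_have 2 → 3 := fun h M _ _ _ => h M
  tfae_have 4 → 5 := fun h M _ _ _ => h M
  tfae_have 3 → 1 := fun h => isSemisimpleRing_of_isD3Module_prod_quotient R fun m hm =>
    have ⟨_, i, r, hE, hri⟩ := exists_retract_of_hasCover_prod hR (hsimple m hm)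
      (h _ (twoGenerated_prod_quotient R m))
    isD3Module_of_retract i r hri hE
  tfae_have 5 → 1 := fun h => isSemisimpleRing_of_isD3Module_prod_quotient R fun m hm =>
    have ⟨_, i, r, hE, hri⟩ := exists_retract_of_hasEnvelope_prod hR (hsimple m hm)
      (h _ (twoGenerated_prod_quotient R m))
    isD3Module_of_retract i r hri hE
  tfae_finish
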